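/- For every n ≥ 1 and every x ∈ {0,1}^n with |x| = Σ_{i=1}^n x_i, the Deutsch–Jozsa output probability π_1(x) = (n − 2|x|)²/n² satisfies π_1(x) = 1/n + (2/n²) · Σ_{1 ≤ i < j ≤ n} (−1)^{x_i + x_j}; hence its Fourier coefficients are α_0 = 1/n, α_b = 0 for |b| = 1, and α_b = 2/n² for each of the n(n−1)/2 strings b with |b| = 2 (and α_b = 0 for |b| > 2), so its Fourier 1-norm is L(π_1) = 1. -/

import Mathlib

/-!
Put `s_i = (−1)^{x_i}`. Then `n − 2|x| = Σ_i s_i` and `s_i² = 1`, so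
`(n − 2|x|)² = n + 2 Σ_{i<j} s_i s_j`, and `s_i s_j = χ_b(x)` for the string `b` of weight two
supported on `{i, j}`. This writes `π₁` as an explicit combination of characters, whose
coefficients are then read off by orthogonality of the characters. They are all nonnegative,
so `L(π₁) = Σ_b α_b = π₁(0) = 1`.
-/

noncomputable section

/-- The character `χ_b(x) = (−1)^{b·x}` on the Boolean cube, where
`b·x = Σ_i b_i x_i`. -/
def chi {n : ℕ} (b x : Fin n → Bool) : ℝ :=
  (-1 : ℝ) ^ (∑ i, if b i && x i then 1 else 0 : ℕ)

/-- The Fourier coefficient `α_b = 2^{−n} Σ_x f(x) χ_b(x)` of `f : {0,1}^n → ℝ`. -/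
def boolFourierCoeff {n : ℕ} (f : (Fin n → Bool) → ℝ) (b : Fin n → Bool) : ℝ :=
  (2 ^ n : ℝ)⁻¹ * ∑ x, f x * chi b x

/-- The Fourier 1-norm `L(f) = Σ_b |α_b|`. -/
def fourierL1 {n : ℕ} (f : (Fin n → Bool) → ℝ) : ℝ :=
  ∑ b, |boolFourierCoeff f b|

open Finset

theorem sq_sum_eq_sum_sq_add_two_mul_sum_lt {ι R : Type*} [Fintype ι] [LinearOrder ι]
    [CommSemiring R] (f : ι → R) :
    (∑ i, f i) ^ 2 = ∑ i, f i ^ 2 + 2 * ∑ p : ι × ι with p.1 < p.2, f p.1 * f p.2 := by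
  have hsplit : ∀ p : ι × ι, f p.1 * f p.2 = (if p.1 = p.2 then f p.1 ^ 2 else 0) +
      ((if p.1 < p.2 then f p.1 * f p.2 else 0) + if p.2 < p.1 then f p.2 * f p.1 else 0) := by
    intro p
    rcases lt_trichotomy p.1 p.2 with h | h | h
    · simp [h, h.ne, h.not_gt]
    · simp [h, sq]
    · simp [h, h.ne', h.not_gt, mul_comm]
  have hdiag : ∑ p : ι × ι, (if p.1 = p.2 then f p.1 ^ 2 else 0) = ∑ i, f i ^ 2 := by
    rw [Fintype.sum_prod_type]
    simp
  have hswap : ∑ p : ι × ι with p.2 < p.1, f p.2 * f p.1 =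
      ∑ p : ι × ι with p.1 < p.2, f p.1 * f p.2 :=
    sum_nbij' Prod.swap Prod.swap (by simp) (by simp) (by simp) (by simp) (by simp)
  rw [sq, sum_mul_sum, ← Fintype.sum_prod_type', Fintype.sum_congr _ _ hsplit,
    sum_add_distrib, sum_add_distrib, hdiag, ← sum_filter, ← sum_filter, hswap]
  ring

theorem Finset.pair_eq_pair_of_lt {α : Type*} [LinearOrder α] {i j k l : α} (hij : i < j)
    (hkl : k < l) (h : ({i, j} : Finset α) = {k, l}) : i = k ∧ j = l := by
  have hcoe := congrArg ((↑) : Finset α → Set α) h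
  simp only [coe_insert, coe_singleton, Set.pair_eq_pair_iff] at hcoe
  rcases hcoe with h | ⟨rfl, rfl⟩
  · exact h
  · exact (lt_asymm hij hkl).elim

section HammingWeight

variable {α : Type*}

def hammingWeight [Fintype α] (b : α → Bool) : ℕ :=
  ∑ i, if b i then 1 else 0

def boolIndicator [DecidableEq α] (s : Finset α) : α → Bool :=
  fun i => decide (i ∈ s)

lemma hammingWeight_eq_card_filter [Fintype α] (b : α → Bool) :
    hammingWeight b = #{i | b i} :=
  (card_filter _ _).symm

lemma boolIndicator_injective [DecidableEq α] : Function.Injective (boolIndicator (α := α)) := by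
  intro s t h
  ext i
  simpa [boolIndicator] using congrFun h i

variable [Fintype α] [DecidableEq α]

lemma hammingWeight_boolIndicator (s : Finset α) : hammingWeight (boolIndicator s) = #s := by
  simp [hammingWeight_eq_card_filter, boolIndicator]

lemma boolIndicator_filter (b : α → Bool) : boolIndicator {i | b i} = b := by
  ext i
  simp [boolIndicator]

end HammingWeight

section WeightTwo

variable {α : Type*} [Fintype α] [LinearOrder α]

lemma exists_lt_boolIndicator_pair_of_hammingWeight_eq_two {b : α → Bool}
    (hb : hammingWeight b = 2) : ∃ i j, i < j ∧ boolIndicator {i, j} = b := by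
  rw [hammingWeight_eq_card_filter, card_eq_two] at hb
  obtain ⟨u, v, huv, hsupp⟩ := hb
  rw [← boolIndicator_filter b, hsupp]
  rcases huv.lt_or_gt with h | h
  · exact ⟨u, v, h, rfl⟩
  · exact ⟨v, u, h, by rw [pair_comm]⟩

lemma sum_lt_eq_sum_hammingWeight_eq_two {M : Type*} [AddCommMonoid M] (g : (α → Bool) → M) :
    ∑ p : α × α with p.1 < p.2, g (boolIndicator {p.1, p.2}) =
      ∑ b with hammingWeight b = 2, g b := by
  refine sum_bij (fun p _ => boolIndicator {p.1, p.2}) ?_ ?_ ?_ fun _ _ => rfl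
  · intro p hp
    simp only [mem_filter, mem_univ, true_and] at hp ⊢
    rw [hammingWeight_boolIndicator, card_pair hp.ne]
  · intro p hp q hq h
    simp only [mem_filter, mem_univ, true_and] at hp hq
    obtain ⟨h1, h2⟩ := pair_eq_pair_of_lt hp hq (boolIndicator_injective h)
    exact Prod.ext h1 h2
  · intro b hb
    simp only [mem_filter, mem_univ, true_and] at hb
    obtain ⟨i, j, hij, rfl⟩ := exists_lt_boolIndicator_pair_of_hammingWeight_eq_two hb
    exact ⟨(i, j), by simpa using hij, rfl⟩

lemma card_hammingWeight_eq_two :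
    Nat.card {b : α → Bool // hammingWeight b = 2} =
      Fintype.card α * (Fintype.card α - 1) / 2 := by
  rw [Nat.card_eq_fintype_card, Fintype.card_subtype, card_eq_sum_ones,
    ← sum_lt_eq_sum_hammingWeight_eq_two, ← card_eq_sum_ones, Fintype.card_product_filter_lt,
    Nat.choose_two_right]

end WeightTwo

section Characters

variable {n : ℕ}

lemma chi_eq_prod (b x : Fin n → Bool) :
    chi b x = ∏ i, (-1 : ℝ) ^ (if b i && x i then 1 else 0 : ℕ) := by
  rw [chi, prod_pow_eq_pow_sum]

lemma chi_false_left (x : Fin n → Bool) : chi (fun _ => false) x = 1 := by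
  simp [chi]

lemma chi_false_right (b : Fin n → Bool) : chi b (fun _ => false) = 1 := by
  simp [chi]

lemma chi_boolIndicator (s : Finset (Fin n)) (x : Fin n → Bool) :
    chi (boolIndicator s) x = (-1 : ℝ) ^ (∑ i ∈ s, if x i then 1 else 0 : ℕ) := by
  rw [chi, ← sum_subset (subset_univ s) fun i _ hi => by simp [boolIndicator, hi]]
  exact congrArg _ (sum_congr rfl fun i hi => by simp [boolIndicator, hi])

lemma sum_chi_mul_chi (a b : Fin n → Bool) :
    ∑ x, chi a x * chi b x = if a = b then 2 ^ n else 0 :=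
  calc ∑ x, chi a x * chi b x
      = ∏ i, ∑ t : Bool, (-1 : ℝ) ^ (if a i && t then 1 else 0 : ℕ) *
          (-1 : ℝ) ^ (if b i && t then 1 else 0 : ℕ) := by
        simp_rw [Fintype.prod_sum, chi_eq_prod, prod_mul_distrib]
    _ = ∏ i, if a i = b i then (2 : ℝ) else 0 :=
        prod_congr rfl fun i _ => by cases a i <;> cases b i <;> norm_num
    _ = if a = b then 2 ^ n else 0 := by simp [prod_ite_zero, funext_iff]

lemma boolFourierCoeff_sum_mul_chi (w : (Fin n → Bool) → ℝ) (b : Fin n → Bool) :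
    boolFourierCoeff (fun x => ∑ c, w c * chi c x) b = w b := by
  simp_rw [boolFourierCoeff, sum_mul, mul_assoc]
  rw [sum_comm]
  simp_rw [← mul_sum, sum_chi_mul_chi, mul_ite, mul_zero, sum_ite_eq', mem_univ, if_true]
  field_simp

end Characters

section DeutschJozsa

variable {n : ℕ}

lemma sum_neg_one_pow_eq_sub_two_mul_hammingWeight (x : Fin n → Bool) :
    ∑ i, (-1 : ℝ) ^ (if x i then 1 else 0 : ℕ) = n - 2 * hammingWeight x := by
  have hterm : ∀ i, (-1 : ℝ) ^ (if x i then 1 else 0 : ℕ) = 1 - 2 * (if x i then 1 else 0 : ℕ) :=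
    fun i => by cases x i <;> norm_num
  simp_rw [hterm, sum_sub_distrib, ← mul_sum, hammingWeight]
  simp

lemma sq_sub_two_mul_hammingWeight_div (x : Fin n → Bool) :
    ((n : ℝ) - 2 * hammingWeight x) ^ 2 / (n : ℝ) ^ 2 = 1 / (n : ℝ) + (2 / (n : ℝ) ^ 2) *
      ∑ p : Fin n × Fin n with p.1 < p.2,
        (-1 : ℝ) ^ ((if x p.1 then 1 else 0) + (if x p.2 then 1 else 0) : ℕ) := by
  have hsq : ∀ i, ((-1 : ℝ) ^ (if x i then 1 else 0 : ℕ)) ^ 2 = 1 :=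
    fun i => by cases x i <;> norm_num
  simp_rw [← sum_neg_one_pow_eq_sub_two_mul_hammingWeight, sq_sum_eq_sum_sq_add_two_mul_sum_lt,
    hsq, pow_add, sum_const, card_univ, Fintype.card_fin, nsmul_one, add_div, sq,
    div_self_mul_self']
  ring

variable (n) in
def deutschJozsaCoeff (b : Fin n → Bool) : ℝ :=
  (if b = (fun _ => false) then 1 / (n : ℝ) else 0) +
    if hammingWeight b = 2 then 2 / (n : ℝ) ^ 2 else 0

lemma sq_sub_two_mul_hammingWeight_div_eq_sum_coeff_mul_chi (x : Fin n → Bool) :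
    ((n : ℝ) - 2 * hammingWeight x) ^ 2 / (n : ℝ) ^ 2 =
      ∑ c, deutschJozsaCoeff n c * chi c x := by
  simp_rw [sq_sub_two_mul_hammingWeight_div, deutschJozsaCoeff, add_mul, sum_add_distrib, ite_mul,
    zero_mul, sum_ite_eq', mem_univ, if_true, ← sum_filter, ← mul_sum,
    ← sum_lt_eq_sum_hammingWeight_eq_two, chi_boolIndicator, chi_false_left, mul_one]
  congr 2
  exact sum_congr rfl fun p hp => by rw [sum_pair (mem_filter.mp hp).2.ne]

lemma deutschJozsaCoeff_of_hammingWeight_ne_zero {b : Fin n → Bool}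
    (hb : hammingWeight b ≠ 0) :
    deutschJozsaCoeff n b = if hammingWeight b = 2 then 2 / (n : ℝ) ^ 2 else 0 := by
  rw [deutschJozsaCoeff, if_neg, zero_add]
  rintro rfl
  simp [hammingWeight] at hb

lemma deutschJozsaCoeff_nonneg (b : Fin n → Bool) : 0 ≤ deutschJozsaCoeff n b := by
  unfold deutschJozsaCoeff
  positivity

end DeutschJozsa

/-- For `n ≥ 1`, the Deutsch–Jozsa output probability
`π₁(x) = (n − 2|x|)²/n²` satisfies
`π₁(x) = 1/n + (2/n²)·Σ_{i<j} (−1)^{x_i + x_j}`; hence its Fourier coefficients are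
`α_0 = 1/n`, `α_b = 0` for `|b| = 1`, `α_b = 2/n²` for each of the `n(n−1)/2` strings `b`
with `|b| = 2`, `α_b = 0` for `|b| > 2`, and its Fourier 1-norm is `L(π₁) = 1`. -/
theorem deutsch_jozsa_fourier (n : ℕ) (hn : 1 ≤ n)
    (π₁ : (Fin n → Bool) → ℝ)
    (hπ : ∀ x, π₁ x =
      ((n : ℝ) - 2 * ((∑ i, if x i then 1 else 0 : ℕ) : ℝ)) ^ 2 / (n : ℝ) ^ 2) :
    (∀ x, π₁ x = 1 / (n : ℝ) + (2 / (n : ℝ) ^ 2) *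
        ∑ p ∈ Finset.univ.filter (fun p : Fin n × Fin n => p.1 < p.2),
          (-1 : ℝ) ^ ((if x p.1 then 1 else 0) + (if x p.2 then 1 else 0) : ℕ)) ∧
    boolFourierCoeff π₁ (fun _ => false) = 1 / (n : ℝ) ∧
    (∀ b : Fin n → Bool, (∑ i, if b i then 1 else 0 : ℕ) = 1 →
      boolFourierCoeff π₁ b = 0) ∧
    (∀ b : Fin n → Bool, (∑ i, if b i then 1 else 0 : ℕ) = 2 →
      boolFourierCoeff π₁ b = 2 / (n : ℝ) ^ 2) ∧
    (∀ b : Fin n → Bool, 2 < (∑ i, if b i then 1 else 0 : ℕ) →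
      boolFourierCoeff π₁ b = 0) ∧
    Nat.card {b : Fin n → Bool // (∑ i, if b i then 1 else 0 : ℕ) = 2} = n * (n - 1) / 2 ∧
    fourierL1 π₁ = 1 := by
  have hrep : π₁ = fun x => ∑ c, deutschJozsaCoeff n c * chi c x :=
    funext fun x => (hπ x).trans (sq_sub_two_mul_hammingWeight_div_eq_sum_coeff_mul_chi x)
  have hcoeff (b : Fin n → Bool) : boolFourierCoeff π₁ b = deutschJozsaCoeff n b := by
    rw [hrep, boolFourierCoeff_sum_mul_chi]
  have hcoeff_ne_zero {b : Fin n → Bool} (hb : hammingWeight b ≠ 0) :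
      boolFourierCoeff π₁ b = if hammingWeight b = 2 then 2 / (n : ℝ) ^ 2 else 0 := by
    rw [hcoeff, deutschJozsaCoeff_of_hammingWeight_ne_zero hb]
  refine ⟨fun x => (hπ x).trans (sq_sub_two_mul_hammingWeight_div x), ?_,
    fun b (hb : hammingWeight b = 1) => ?_, fun b (hb : hammingWeight b = 2) => ?_,
    fun b (hb : 2 < hammingWeight b) => ?_, ?_, ?_⟩
  · simp [hcoeff, deutschJozsaCoeff, hammingWeight]
  · simp [hcoeff_ne_zero, hb]
  · simp [hcoeff_ne_zero, hb]
  · rw [hcoeff_ne_zero (by omega), if_neg (by omega)]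
  · exact (card_hammingWeight_eq_two (α := Fin n)).trans (by rw [Fintype.card_fin])
  · calc fourierL1 π₁ = ∑ b, deutschJozsaCoeff n b := by
          simp_rw [fourierL1, hcoeff, abs_of_nonneg (deutschJozsaCoeff_nonneg _)]
      _ = π₁ (fun _ => false) := by simp [hrep, chi_false_right]
      _ = 1 := by
          have hn0 : (n : ℝ) ≠ 0 := Nat.cast_ne_zero.mpr (by omega)
          simp [hπ, hn0]
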